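/- Let G and H be finite simple connected graphs whose vertex sets intersect in exactly one vertex x, and let G +_x H denote their union. Then the set of cardinalities of isometric subgraphs of G +_x H whose vertex set contains x equals {a + b − 1 : a ∈ dp^x(G), b ∈ dp^x(H)}, where dp^x(K) denotes the set of cardinalities |A| over all A ⊆ V(K) with x ∈ A such that K[A] is an isometric subgraph of K. -/

import Mathlib

/-!
Every walk between the two sides of `G +_x H` passes through `x`, so collapsing one side onto `x`
is a non-expansive retraction onto the other side. Applied to the whole graph, it shows that `G`
and `H` sit isometrically in `G +_x H`; applied inside an isometric `A ∋ x`, it shows that the two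
halves of `A` are isometric. Conversely, isometric `B ∋ x` in `G` and `C ∋ x` in `H` glue to an
isometric `B ∪ C`, because `x` lies on a geodesic between any vertex of `B` and any vertex of `C`.
In both directions the two pieces meet exactly in `x`, whence the count `a + b - 1`.
-/

open SimpleGraph

/-- `G[A]` is an isometric subgraph of `G`: it is connected and distances
within `G[A]` agree with distances in `G`. -/
def IsIsomSub {V : Type*} (G : SimpleGraph V) (A : Set V) : Prop :=
  (G.induce A).Connected ∧
    ∀ u v : A, (G.induce A).dist u v = G.dist (u : V) (v : V)

/-- `dp^x(K)`: the set of cardinalities of isometric subgraphs of `K`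
containing the vertex `x`. -/
def dpIn {V : Type*} (K : SimpleGraph V) (x : V) : Set ℕ :=
  {n : ℕ | ∃ A : Set V, x ∈ A ∧ A.ncard = n ∧ IsIsomSub K A}

namespace SimpleGraph

variable {W W' : Type*} {G : SimpleGraph W} {G' : SimpleGraph W'}

def IsWeakHom (G : SimpleGraph W) (G' : SimpleGraph W') (f : W → W') : Prop :=
  ∀ ⦃u v⦄, G.Adj u v → f u = f v ∨ G'.Adj (f u) (f v)

namespace IsWeakHom

variable {f : W → W'}

theorem exists_walk_length_le (hf : G.IsWeakHom G' f) :
    ∀ {u v : W} (p : G.Walk u v), ∃ q : G'.Walk (f u) (f v), q.length ≤ p.length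
  | _, _, .nil => ⟨.nil, le_rfl⟩
  | _, _, .cons h p => by
    obtain ⟨q, hq⟩ := hf.exists_walk_length_le p
    rcases hf h with heq | hadj
    · exact ⟨q.copy heq.symm rfl, by simp only [Walk.length_copy, Walk.length_cons]; omega⟩
    · exact ⟨.cons hadj q, by simp only [Walk.length_cons]; omega⟩

theorem reachable (hf : G.IsWeakHom G' f) {u v : W} (h : G.Reachable u v) :
    G'.Reachable (f u) (f v) :=
  let ⟨p⟩ := h
  ⟨(hf.exists_walk_length_le p).choose⟩

theorem dist_le (hf : G.IsWeakHom G' f) {u v : W} (h : G.Reachable u v) :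
    G'.dist (f u) (f v) ≤ G.dist u v := by
  obtain ⟨p, hp⟩ := h.exists_walk_length_eq_dist
  obtain ⟨q, hq⟩ := hf.exists_walk_length_le p
  exact (SimpleGraph.dist_le q).trans (hp ▸ hq)

end IsWeakHom

theorem Hom.isWeakHom (φ : G →g G') : G.IsWeakHom G' φ :=
  fun _ _ h => .inr (φ.map_adj h)

theorem Iso.dist_eq (φ : G ≃g G') (u v : W) : G'.dist (φ u) (φ v) = G.dist u v := by
  by_cases h : G.Reachable u v
  · refine le_antisymm (φ.toHom.isWeakHom.dist_le h) ?_
    have := φ.symm.toHom.isWeakHom.dist_le ((Iso.reachable_iff (φ := φ)).2 h)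
    simpa using this
  · rw [dist_eq_zero_of_not_reachable h,
      dist_eq_zero_of_not_reachable (mt Iso.reachable_iff.1 h)]

def ExitsOnlyAt (G : SimpleGraph W) (s : Set W) (y : W) : Prop :=
  ∀ ⦃u v⦄, G.Adj u v → u ∈ s → v ∉ s → u = y

theorem exitsOnlyAt_of_inter_eq_singleton {s t : Set W} {y : W} (hst : s ∩ t = {y})
    (hedge : ∀ u v : W, G.Adj u v → (u ∈ s ∧ v ∈ s) ∨ (u ∈ t ∧ v ∈ t)) :
    G.ExitsOnlyAt s y := by
  intro u v h hu hv
  have hut : u ∈ t := by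
    rcases hedge u v h with ⟨-, hvs⟩ | ⟨hut, -⟩
    exacts [absurd hvs hv, hut]
  exact (hst.subset ⟨hu, hut⟩ : u ∈ ({y} : Set W))

open Classical in
noncomputable def retractTo (s : Set W) (y : s) (v : W) : s :=
  if h : v ∈ s then ⟨v, h⟩ else y

theorem retractTo_coe {s : Set W} (y v : s) : retractTo s y v = v :=
  dif_pos v.2

namespace ExitsOnlyAt

variable {s : Set W} {y : W}

theorem isWeakHom_retractTo (hs : G.ExitsOnlyAt s y) (hy : y ∈ s) :
    G.IsWeakHom (G.induce s) (retractTo s ⟨y, hy⟩) := by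
  intro u v h
  by_cases hu : u ∈ s <;> by_cases hv : v ∈ s
  · exact .inr (by simpa [retractTo, hu, hv] using h)
  · obtain rfl := hs h hu hv
    exact .inl (by simp [retractTo, hu, hv])
  · obtain rfl := hs h.symm hv hu
    exact .inl (by simp [retractTo, hu, hv])
  · exact .inl (by simp [retractTo, hu, hv])

theorem reachable_induce (hs : G.ExitsOnlyAt s y) (hy : y ∈ s) {a b : s}
    (h : G.Reachable a b) : (G.induce s).Reachable a b := by
  simpa only [retractTo_coe] using (hs.isWeakHom_retractTo hy).reachable h

theorem dist_induce (hs : G.ExitsOnlyAt s y) (hy : y ∈ s) (a b : s) :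
    (G.induce s).dist a b = G.dist a b := by
  by_cases h : G.Reachable a b
  · refine le_antisymm ?_ ((Embedding.induce s).toHom.isWeakHom.dist_le (hs.reachable_induce hy h))
    simpa only [retractTo_coe] using (hs.isWeakHom_retractTo hy).dist_le h
  · rw [dist_eq_zero_of_not_reachable h,
      dist_eq_zero_of_not_reachable fun h' => h (h'.map (Embedding.induce s).toHom)]

theorem isIsomSub (hs : G.ExitsOnlyAt s y) (hy : y ∈ s) (hG : G.Connected) : IsIsomSub G s :=
  have : Nonempty s := ⟨⟨y, hy⟩⟩
  ⟨⟨fun a b => hs.reachable_induce hy (hG.preconnected a b)⟩, hs.dist_induce hy⟩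

theorem dist_add_dist_le (hs : G.ExitsOnlyAt s y) {u v : W} (hu : u ∈ s) (hv : v ∉ s)
    (h : G.Reachable u v) : G.dist u y + G.dist y v ≤ G.dist u v := by
  classical
  obtain ⟨p, hp⟩ := h.exists_walk_length_eq_dist
  obtain ⟨d, hd, hds, hdv⟩ := p.exists_boundary_dart s hu hv
  have hyp : y ∈ p.support := hs d.adj hds hdv ▸ p.dart_fst_mem_support_of_mem_darts hd
  calc G.dist u y + G.dist y v
      ≤ (p.takeUntil y hyp).length + (p.dropUntil y hyp).length :=
        add_le_add (dist_le _) (dist_le _)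
    _ = G.dist u v := by rw [← Walk.length_append, p.take_spec hyp, hp]

end ExitsOnlyAt

end SimpleGraph

section IsIsomSub

variable {V : Type*} {G : SimpleGraph V} {A B : Set V}

theorem IsIsomSub.reachable (hA : IsIsomSub G A) {u v : V} (hu : u ∈ A) (hv : v ∈ A) :
    G.Reachable u v :=
  (hA.1.preconnected ⟨u, hu⟩ ⟨v, hv⟩).map (Embedding.induce A).toHom

theorem IsIsomSub.dist_induce_le (hA : IsIsomSub G A) (hAB : A ⊆ B) {u v : V} (hu : u ∈ A)
    (hv : v ∈ A) : (G.induce B).dist ⟨u, hAB hu⟩ ⟨v, hAB hv⟩ ≤ G.dist u v :=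
  ((G.induceHomOfLE hAB).toHom.isWeakHom.dist_le
    (hA.1.preconnected ⟨u, hu⟩ ⟨v, hv⟩)).trans_eq (hA.2 _ _)

theorem isIsomSub_of_dist_le (hA : (G.induce A).Connected)
    (h : ∀ a b : A, (G.induce A).dist a b ≤ G.dist a b) : IsIsomSub G A :=
  ⟨hA, fun a b =>
    (h a b).antisymm ((Embedding.induce A).toHom.isWeakHom.dist_le (hA.preconnected a b))⟩

noncomputable def induceInduceIso (G : SimpleGraph V) (s : Set V) (B : Set s) :
    (G.induce s).induce B ≃g G.induce (Subtype.val '' B) where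
  toEquiv := Equiv.Set.image Subtype.val B Subtype.val_injective
  map_rel_iff' := Iff.rfl

theorem isIsomSub_induce_iff {s : Set V} (hs : ∀ a b : s, (G.induce s).dist a b = G.dist a b)
    (B : Set s) : IsIsomSub (G.induce s) B ↔ IsIsomSub G (Subtype.val '' B) := by
  let e := induceInduceIso G s B
  refine and_congr e.connected_iff ?_
  refine e.toEquiv.forall_congr fun {u} => e.toEquiv.forall_congr fun {v} => ?_
  rw [hs, ← e.dist_eq]
  rfl

theorem IsIsomSub.inter_of_exitsOnlyAt {s : Set V} {y : V} (hA : IsIsomSub G A)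
    (hs : G.ExitsOnlyAt s y) (hyA : y ∈ A) (hys : y ∈ s) : IsIsomSub G (A ∩ s) := by
  have hs' : (G.induce A).ExitsOnlyAt (Subtype.val ⁻¹' s) ⟨y, hyA⟩ :=
    fun _ _ h hu hv => Subtype.ext (hs h hu hv)
  simpa only [Subtype.image_preimage_val] using
    (isIsomSub_induce_iff hA.2 _).1 (hs'.isIsomSub hys hA.1)

theorem IsIsomSub.union {y : V} (hA : IsIsomSub G A) (hB : IsIsomSub G B) (hyA : y ∈ A)
    (hyB : y ∈ B) (hcut : ∀ a ∈ A, ∀ b ∈ B, G.dist a y + G.dist y b ≤ G.dist a b) :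
    IsIsomSub G (A ∪ B) := by
  have hconn : (G.induce (A ∪ B)).Connected :=
    induce_union_connected hA.1.preconnected hB.1.preconnected ⟨y, hyA, hyB⟩
  have hcross : ∀ a (ha : a ∈ A) b (hb : b ∈ B),
      (G.induce (A ∪ B)).dist ⟨a, .inl ha⟩ ⟨b, .inr hb⟩ ≤ G.dist a b := by
    intro a ha b hb
    calc (G.induce (A ∪ B)).dist ⟨a, .inl ha⟩ ⟨b, .inr hb⟩
        ≤ (G.induce (A ∪ B)).dist ⟨a, .inl ha⟩ ⟨y, .inl hyA⟩
          + (G.induce (A ∪ B)).dist ⟨y, .inr hyB⟩ ⟨b, .inr hb⟩ := hconn.dist_triangle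
      _ ≤ G.dist a y + G.dist y b :=
        add_le_add (hA.dist_induce_le Set.subset_union_left ha hyA)
          (hB.dist_induce_le Set.subset_union_right hyB hb)
      _ ≤ G.dist a b := hcut a ha b hb
  refine isIsomSub_of_dist_le hconn ?_
  rintro ⟨a, ha | ha⟩ ⟨b, hb | hb⟩
  · exact hA.dist_induce_le Set.subset_union_left ha hb
  · exact hcross a ha b hb
  · rw [dist_comm, G.dist_comm]
    exact hcross b hb a ha
  · exact hB.dist_induce_le Set.subset_union_right ha hb

theorem dpIn_induce_eq {s : Set V} {y : V}
    (hs : ∀ a b : s, (G.induce s).dist a b = G.dist a b) (hy : y ∈ s) :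
    dpIn (G.induce s) ⟨y, hy⟩ =
      {n | ∃ B ⊆ s, y ∈ B ∧ B.ncard = n ∧ IsIsomSub G B} := by
  ext n
  constructor
  · rintro ⟨B, hyB, rfl, hB⟩
    exact ⟨_, Subtype.coe_image_subset s B, ⟨_, hyB, rfl⟩,
      Set.ncard_image_of_injective B Subtype.val_injective, (isIsomSub_induce_iff hs B).1 hB⟩
  · rintro ⟨B, hBs, hyB, rfl, hB⟩
    have himage : Subtype.val '' (Subtype.val ⁻¹' B : Set s) = B := by
      rw [Subtype.image_preimage_val, Set.inter_eq_right.2 hBs]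
    refine ⟨Subtype.val ⁻¹' B, hyB, ?_, (isIsomSub_induce_iff hs _).2 (by rwa [himage])⟩
    rw [← Set.ncard_image_of_injective _ Subtype.val_injective, himage]

end IsIsomSub

theorem Set.ncard_union_of_inter_eq_singleton {α : Type*} [Finite α] {s t : Set α} {y : α}
    (h : s ∩ t = {y}) : (s ∪ t).ncard = s.ncard + t.ncard - 1 := by
  have := Set.ncard_union_add_ncard_inter s t
  rw [h, Set.ncard_singleton] at this
  omega

theorem dp_through_cut_vertex_general {V : Type*} [Fintype V] (K : SimpleGraph V)
    (sG sH : Set V) (x : V) (hxG : x ∈ sG) (hxH : x ∈ sH)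
    (hcap : sG ∩ sH = {x}) (hcup : sG ∪ sH = Set.univ)
    (hedge : ∀ u v : V, K.Adj u v → (u ∈ sG ∧ v ∈ sG) ∨ (u ∈ sH ∧ v ∈ sH)) :
    dpIn K x =
      {n : ℕ | ∃ a ∈ dpIn (K.induce sG) ⟨x, hxG⟩,
        ∃ b ∈ dpIn (K.induce sH) ⟨x, hxH⟩, n = a + b - 1} := by
  have hG : K.ExitsOnlyAt sG x := exitsOnlyAt_of_inter_eq_singleton hcap hedge
  have hH : K.ExitsOnlyAt sH x :=
    exitsOnlyAt_of_inter_eq_singleton (Set.inter_comm sG sH ▸ hcap) fun u v h =>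
      (hedge u v h).symm
  rw [dpIn_induce_eq (hG.dist_induce hxG) hxG, dpIn_induce_eq (hH.dist_induce hxH) hxH]
  ext n
  constructor
  · rintro ⟨A, hxA, rfl, hA⟩
    refine ⟨_, ⟨A ∩ sG, Set.inter_subset_right, ⟨hxA, hxG⟩, rfl,
        hA.inter_of_exitsOnlyAt hG hxA hxG⟩,
      _, ⟨A ∩ sH, Set.inter_subset_right, ⟨hxA, hxH⟩, rfl,
        hA.inter_of_exitsOnlyAt hH hxA hxH⟩, ?_⟩
    have hAx : A ∩ sG ∩ (A ∩ sH) = {x} := by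
      rw [← Set.inter_inter_distrib_left, hcap, Set.inter_singleton_of_mem hxA]
    rw [← Set.ncard_union_of_inter_eq_singleton hAx, ← Set.inter_union_distrib_left, hcup,
      Set.inter_univ]
  · rintro ⟨_, ⟨B, hBG, hxB, rfl, hB⟩, _, ⟨C, hCH, hxC, rfl, hC⟩, rfl⟩
    have hBC : B ∩ C = {x} := (hcap ▸ Set.inter_subset_inter hBG hCH).antisymm
      (Set.singleton_subset_iff.2 ⟨hxB, hxC⟩)
    refine ⟨B ∪ C, .inl hxB, Set.ncard_union_of_inter_eq_singleton hBC,
      hB.union hC hxB hxC fun b hb c hc => ?_⟩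
    by_cases hcG : c ∈ sG
    · obtain rfl : c = x := hcap.subset ⟨hcG, hCH hc⟩
      simp
    · exact hG.dist_add_dist_le (hBG hb) hcG ((hB.reachable hb hxB).trans (hC.reachable hxC hc))

/-- Let `K = G +_x H` be the union of two finite simple connected graphs
`G = K[sG]` and `H = K[sH]` whose vertex sets intersect in exactly the
vertex `x`.  Then the set of cardinalities of isometric subgraphs of
`G +_x H` containing `x` equals `{a + b - 1 : a ∈ dp^x(G), b ∈ dp^x(H)}`. -/
theorem dp_through_cut_vertex {V : Type*} [Fintype V] (K : SimpleGraph V)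
    (sG sH : Set V) (x : V) (hxG : x ∈ sG) (hxH : x ∈ sH)
    (hcap : sG ∩ sH = {x}) (hcup : sG ∪ sH = Set.univ)
    (hedge : ∀ u v : V, K.Adj u v → (u ∈ sG ∧ v ∈ sG) ∨ (u ∈ sH ∧ v ∈ sH))
    (hGconn : (K.induce sG).Connected) (hHconn : (K.induce sH).Connected) :
    dpIn K x =
      {n : ℕ | ∃ a ∈ dpIn (K.induce sG) ⟨x, hxG⟩,
        ∃ b ∈ dpIn (K.induce sH) ⟨x, hxH⟩, n = a + b - 1} :=
  dp_through_cut_vertex_general K sG sH x hxG hxH hcap hcup hedge
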